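/- There exists an integer n₀ such that for all n ≥ n₀ the following holds with R = n^{4/7}: for every closed interval [a, a + 8·R^{−2}] ⊆ [π − 1/2, π], there exist integers s, t with 0 ≤ s ≤ t ≤ R/2 such that π − 2(t − s)·R^{−1} − 8t·R^{−2} ∈ [a, a + 8·R^{−2}]. (The quantity π − 2(t − s)·R^{−1} − 8t·R^{−2} is the clockwise angle ∠p_s O q_t subtended at the origin O by the points p_s and q_t of P₃.) -/
import Mathlib


open scoped Real

/-- The radius `R = n^{4/7}` (a real power of the positive integer `n`). -/
noncomputable def Rpow (n : ℕ) : ℝ := (n : ℝ) ^ ((4 : ℝ) / 7)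

/-- Auxiliary: converting cleared-denominator inequalities back to the angle bounds. -/
lemma aux_bounds (R x d t : ℝ) (hR : 0 < R)
    (hL : 2 * d * R + 8 * t ≤ x * R ^ 2)
    (hU : x * R ^ 2 ≤ 2 * d * R + 8 * t + 8) :
    x - 8 * (R ^ 2)⁻¹ ≤ 2 * d * R⁻¹ + 8 * t * (R ^ 2)⁻¹ ∧
      2 * d * R⁻¹ + 8 * t * (R ^ 2)⁻¹ ≤ x := by
  have hR2 : (0 : ℝ) < R ^ 2 := by positivity
  have e : 2 * d * R⁻¹ + 8 * t * (R ^ 2)⁻¹ = (2 * d * R + 8 * t) / R ^ 2 := by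
    field_simp
  constructor
  · rw [e, le_div_iff₀ hR2]
    have : (x - 8 * (R ^ 2)⁻¹) * R ^ 2 = x * R ^ 2 - 8 := by
      field_simp
    rw [this]; linarith
  · rw [e, div_le_iff₀ hR2]; linarith

/-- For all sufficiently large `n`, with `R = n^{4/7}`: every closed subinterval
`[a, a + 8·R⁻²]` of `[π - 1/2, π]` contains a number of the form
`π - 2(t - s)·R⁻¹ - 8t·R⁻²` with integers `0 ≤ s ≤ t ≤ R/2` (the clockwise angle
`∠ p_s O q_t` subtended at the origin by the points `p_s, q_t` of `P₃`). -/
theorem P3_angles_dense :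
    ∃ n₀ : ℕ, ∀ n : ℕ, n₀ ≤ n →
      ∀ a : ℝ, π - 1 / 2 ≤ a → a + 8 * ((Rpow n) ^ 2)⁻¹ ≤ π →
        ∃ s t : ℕ, s ≤ t ∧ (t : ℝ) ≤ Rpow n / 2 ∧
          π - 2 * ((t : ℝ) - (s : ℝ)) * (Rpow n)⁻¹ - 8 * (t : ℝ) * ((Rpow n) ^ 2)⁻¹
            ∈ Set.Icc a (a + 8 * ((Rpow n) ^ 2)⁻¹) := by
  refine ⟨1, fun n hn a ha1 ha2 => ?_⟩
  obtain ⟨R, hRdef⟩ : ∃ r : ℝ, Rpow n = r := ⟨_, rfl⟩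
  rw [hRdef] at ha2 ⊢
  have hR1 : (1 : ℝ) ≤ R := by
    rw [← hRdef]
    have h1 : (1 : ℝ) ≤ (n : ℝ) := by exact_mod_cast hn
    calc (1 : ℝ) = (1 : ℝ) ^ ((4 : ℝ) / 7) := (Real.one_rpow _).symm
      _ ≤ Rpow n := Real.rpow_le_rpow zero_le_one h1 (by norm_num)
  have hR0 : (0 : ℝ) < R := lt_of_lt_of_le one_pos hR1
  have hR2 : (0 : ℝ) < R ^ 2 := by positivity
  -- cleared-denominator bounds on δ = π - a
  have hδub : π - a ≤ 1 / 2 := by linarith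
  have hδlb : 8 ≤ (π - a) * R ^ 2 := by
    have h1 : 8 * (R ^ 2)⁻¹ ≤ π - a := by linarith
    have h2 := mul_le_mul_of_nonneg_right h1 hR2.le
    have h3 : 8 * (R ^ 2)⁻¹ * R ^ 2 = 8 := by field_simp
    linarith
  have hδpos : 0 < π - a := by nlinarith
  by_cases hcase : (π - a) * R ≤ 4
  · -- small δ: take s = t = ⌊(π-a)R²/8⌋
    set t := ⌊(π - a) * R ^ 2 / 8⌋₊ with ht
    have ht1 : (t : ℝ) ≤ (π - a) * R ^ 2 / 8 := Nat.floor_le (by positivity)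
    have ht2 : (π - a) * R ^ 2 / 8 < (t : ℝ) + 1 := Nat.lt_floor_add_one _
    have hL : 2 * (0 : ℝ) * R + 8 * (t : ℝ) ≤ (π - a) * R ^ 2 := by linarith
    have hU : (π - a) * R ^ 2 ≤ 2 * (0 : ℝ) * R + 8 * (t : ℝ) + 8 := by linarith
    obtain ⟨hlow, hhigh⟩ := aux_bounds R (π - a) 0 (t : ℝ) hR0 hL hU
    refine ⟨t, t, le_refl _, ?_, ?_, ?_⟩
    · -- t ≤ R/2 : 8t ≤ (π-a)R² = ((π-a)R)·R ≤ 4R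
      have h4 : (π - a) * R ^ 2 ≤ 4 * R := by nlinarith
      linarith
    · have : 2 * ((t : ℝ) - (t : ℝ)) * R⁻¹ = 2 * (0 : ℝ) * R⁻¹ := by ring
      rw [this]; linarith
    · have : 2 * ((t : ℝ) - (t : ℝ)) * R⁻¹ = 2 * (0 : ℝ) * R⁻¹ := by ring
      rw [this]; linarith
  · -- large δ
    push_neg at hcase
    set k := ⌊(π - a) * R / 2⌋₊ with hk
    have hk1 : (k : ℝ) ≤ (π - a) * R / 2 := Nat.floor_le (by positivity)
    have hk2 : (π - a) * R / 2 < (k : ℝ) + 1 := Nat.lt_floor_add_one _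
    have hk2' : 2 ≤ k := by
      have h2 : (2 : ℝ) ≤ (π - a) * R / 2 := by linarith
      exact Nat.le_floor (by exact_mod_cast h2)
    set d := k - 1 with hd
    have hdk : (d : ℝ) = (k : ℝ) - 1 := by
      rw [hd, Nat.cast_sub (le_trans (by norm_num) hk2')]; norm_num
    -- bounds: (π-a)R - 4 < 2d ≤ (π-a)R - 2
    have hdub : 2 * (d : ℝ) ≤ (π - a) * R - 2 := by rw [hdk]; linarith
    have hdlb : (π - a) * R - 4 < 2 * (d : ℝ) := by rw [hdk]; linarith
    -- rr := (π-a)R² - 2dR, satisfies 2R ≤ rr < 4R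
    have hrr1 : 2 * R ≤ (π - a) * R ^ 2 - 2 * (d : ℝ) * R := by nlinarith
    have hrr2 : (π - a) * R ^ 2 - 2 * (d : ℝ) * R < 4 * R := by nlinarith
    set t := ⌊((π - a) * R ^ 2 - 2 * (d : ℝ) * R) / 8⌋₊ with ht
    have ht1 : (t : ℝ) ≤ ((π - a) * R ^ 2 - 2 * (d : ℝ) * R) / 8 :=
      Nat.floor_le (by linarith)
    have ht2 : ((π - a) * R ^ 2 - 2 * (d : ℝ) * R) / 8 < (t : ℝ) + 1 :=
      Nat.lt_floor_add_one _
    have hdt : d ≤ t := by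
      have hdr : (d : ℝ) < (t : ℝ) := by
        -- d ≤ (π-a)R/2 - 1 ≤ R/4 - 1 ≤ rr/8 - 1 < t
        have h1 : (d : ℝ) ≤ (π - a) * R / 2 - 1 := by rw [hdk]; linarith
        have h2 : (π - a) * R / 2 ≤ R / 4 := by nlinarith
        have h3 : R / 4 ≤ ((π - a) * R ^ 2 - 2 * (d : ℝ) * R) / 8 := by linarith
        linarith
      exact_mod_cast le_of_lt hdr
    have hL : 2 * (d : ℝ) * R + 8 * (t : ℝ) ≤ (π - a) * R ^ 2 := by linarith
    have hU : (π - a) * R ^ 2 ≤ 2 * (d : ℝ) * R + 8 * (t : ℝ) + 8 := by linarith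
    obtain ⟨hlow, hhigh⟩ := aux_bounds R (π - a) (d : ℝ) (t : ℝ) hR0 hL hU
    have hcast : (t : ℝ) - ((t - d : ℕ) : ℝ) = (d : ℝ) := by
      rw [Nat.cast_sub hdt]; ring
    refine ⟨t - d, t, Nat.sub_le _ _, ?_, ?_, ?_⟩
    · -- t ≤ R/2 : 8t ≤ rr < 4R
      linarith
    · rw [hcast]; linarith
    · rw [hcast]; linarith
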